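/- arXiv:0906.4326 — 2 statements merged into one kernel-verified Lean document; each statement's English description precedes it below -/
import Mathlib

section
/- A pure strategy σ for player i is not weakly dominated by any mixed strategy of player i with respect to Σ′_{-i} if and only if there is a belief μ of player i whose support is all of Σ′_{-i} such that σ is a best response to μ. -/
open MeasureTheory

namespace IA

set_option linter.unusedVariables false

variable {n : ℕ}

/-! ### Finite normal-form games -/

/-- `Oth S i`: profiles of strategies of the players other than `i` (the set `Σ_{-i}`). -/
def Oth (S : Fin n → Type) (i : Fin n) : Type := ∀ j : {j : Fin n // j ≠ i}, S j.1

instance (S : Fin n → Type) [∀ j, Fintype (S j)] (i : Fin n) : Fintype (Oth S i) := by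
  unfold Oth; infer_instance

instance (S : Fin n → Type) [∀ j, Nonempty (S j)] (i : Fin n) : Nonempty (Oth S i) := by
  unfold Oth; infer_instance

variable {S : Fin n → Type}

/-- Glue a strategy for player `i` with a profile for the other players. -/
def ext (i : Fin n) (σ : S i) (τ : Oth S i) : ∀ j, S j :=
  fun j => if h : j = i then cast (congrArg S h).symm σ else τ ⟨j, h⟩

section
variable [∀ j, Fintype (S j)]

/-- Expected utility of the pure strategy `σ` of player `i` against the belief `μ` on `Σ_{-i}`. -/
noncomputable def EU (u : ∀ i : Fin n, (∀ j, S j) → ℝ) (i : Fin n) (σ : S i)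
    (μ : Oth S i → ℝ) : ℝ :=
  ∑ τ : Oth S i, μ τ * u i (ext i σ τ)

/-- `μ` is a probability distribution on `Σ_{-i}` (a belief of player `i`). -/
def IsBelief {i : Fin n} (μ : Oth S i → ℝ) : Prop :=
  (∀ τ, 0 ≤ μ τ) ∧ ∑ τ, μ τ = 1

/-- `σ` is a best response (maximizes expected utility over `Σ_i`) to belief `μ`. -/
def BestResponse (u : ∀ i : Fin n, (∀ j, S j) → ℝ) (i : Fin n) (σ : S i)
    (μ : Oth S i → ℝ) : Prop :=
  ∀ σ' : S i, EU u i σ' μ ≤ EU u i σ μ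

end

/-- The product `Π_{j' ≠ j} X_{j'}` of sets of strategies, viewed inside `Σ_{-j}`. -/
def OthSet (X : ∀ j : Fin n, Set (S j)) (j : Fin n) : Set (Oth S j) :=
  {τ | ∀ j', τ j' ∈ X j'.1}

/-! ### Mixed strategies, weak/strong dominance, iterated deletion -/

/-- a probability distribution on a finite type -/
def IsDist {α : Type} [Fintype α] (ν : α → ℝ) : Prop := (∀ a, 0 ≤ ν a) ∧ ∑ a, ν a = 1

section
variable [∀ j, Fintype (S j)]

/-- Expected utility of the mixed strategy `ν` of player `i` against `τ_{-i}`. -/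
noncomputable def EUmix (u : ∀ i : Fin n, (∀ j, S j) → ℝ) (i : Fin n) (ν : S i → ℝ)
    (τ : Oth S i) : ℝ :=
  ∑ σ : S i, ν σ * u i (ext i σ τ)

/-- The mixed strategy `ν` strongly dominates the pure strategy `σ` with respect to `Y ⊆ Σ_{-i}`. -/
def SDom (u : ∀ i : Fin n, (∀ j, S j) → ℝ) (i : Fin n) (ν : S i → ℝ) (σ : S i)
    (Y : Set (Oth S i)) : Prop :=
  ∀ τ ∈ Y, u i (ext i σ τ) < EUmix u i ν τ

/-- The mixed strategy `ν` weakly dominates the pure strategy `σ` with respect to `Y ⊆ Σ_{-i}`. -/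
def WDom (u : ∀ i : Fin n, (∀ j, S j) → ℝ) (i : Fin n) (ν : S i → ℝ) (σ : S i)
    (Y : Set (Oth S i)) : Prop :=
  (∀ τ ∈ Y, u i (ext i σ τ) ≤ EUmix u i ν τ) ∧ (∃ τ ∈ Y, u i (ext i σ τ) < EUmix u i ν τ)

/-- `σ` is not weakly dominated by any mixed strategy of `i` with respect to `Y`. -/
def NotWDominated (u : ∀ i : Fin n, (∀ j, S j) → ℝ) (i : Fin n) (σ : S i)
    (Y : Set (Oth S i)) : Prop :=
  ¬ ∃ ν : S i → ℝ, IsDist ν ∧ WDom u i ν σ Y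

/-- `Xiter u k j`: the strategies of player `j` surviving `k` rounds of iterated deletion of
weakly dominated strategies. -/
def Xiter (u : ∀ i : Fin n, (∀ j, S j) → ℝ) : ℕ → ∀ j : Fin n, Set (S j)
  | 0, _ => Set.univ
  | (k+1), j => {σ | σ ∈ Xiter u k j ∧ NotWDominated u j σ (OthSet (Xiter u k) j)}

end

end IA

/-!
A belief of full support on `Y` would turn a weakly dominating mixed strategy into a strict gain
in expected payoff, so a best response to it is not weakly dominated.

Conversely, apply Stiemke's theorem of the alternative to the matrix of payoff gains
`u(a, τ) - u(σ, τ)` with its columns outside `Y` set to zero: if no nonnegative combination of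
its rows is semipositive (i.e. `σ` is not weakly dominated), some strictly positive `y` makes
every row's weighted gain nonpositive, and `y` restricted to `Y` and normalised is the belief.
Stiemke's theorem follows from Tucker's complementarity theorem for a subspace `L ⊆ ℝ^ι`, proved
by choosing `p ∈ L` nonnegative with maximal support `J` and separating the closed subspace
`L + ℝ^J` from the compact simplex on the complement of `J`. Only subspaces need to be closed
there, never finitely generated cones.
-/

open Matrix Finset Filter

section Alternative

variable {ι : Type*} [Fintype ι]

theorem exists_nonneg_add_smul_nonneg {u p : ι → ℝ} (hp : 0 ≤ p)
    (hu : ∀ i, p i = 0 → 0 ≤ u i) : ∃ t : ℝ, 0 ≤ t ∧ 0 ≤ u + t • p := by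
  have h : ∀ i, ∀ᶠ t : ℝ in atTop, 0 ≤ u i + t * p i := by
    intro i
    rcases (hp i).eq_or_lt with hpi | hpi
    · exact .of_forall fun t => by simpa [← hpi] using hu i hpi.symm
    · filter_upwards [eventually_ge_atTop (-u i / p i)] with t ht
      rw [div_le_iff₀ hpi] at ht
      linarith
  obtain ⟨t, ht0, ht⟩ := ((eventually_ge_atTop 0).and (eventually_all.2 h)).exists
  exact ⟨t, ht0, ht⟩

theorem exists_orthogonal_pos_on (L : Submodule ℝ (ι → ℝ)) (P : Set ι)
    (hL : ∀ u ∈ L, (∀ i ∈ P, 0 ≤ u i) → ∀ i ∈ P, u i = 0) :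
    ∃ y : ι → ℝ, (∀ i ∈ P, 0 < y i) ∧ (∀ i ∉ P, y i = 0) ∧ ∀ u ∈ L, y ⬝ᵥ u = 0 := by
  classical
  set Q : Submodule ℝ (ι → ℝ) := Submodule.pi P fun _ => ⊥
  set K : Set (ι → ℝ) :=
    stdSimplex ℝ ι ∩ (Submodule.pi Pᶜ fun _ => (⊥ : Submodule ℝ ℝ) :)
  have hdisj : Disjoint K (L ⊔ Q : Submodule ℝ (ι → ℝ)) := by
    rw [Set.disjoint_left]
    rintro w ⟨⟨hw0, hw1⟩, hwP⟩ hw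
    obtain ⟨v, hv, z, hz, rfl⟩ := Submodule.mem_sup.1 hw
    simp only [Q, Submodule.mem_pi, Submodule.mem_bot] at hz
    have hvP := hL v hv fun i hi => by simpa [hz i hi] using hw0 i
    have hvz : ∀ i, v i + z i = 0 := fun i => by
      by_cases hi : i ∈ P
      · simp [hvP i hi, hz i hi]
      · simpa using hwP i hi
    simp [hvz] at hw1
  obtain ⟨f, s, t, hfK, hst, hfL⟩ := geometric_hahn_banach_compact_closed
    ((convex_stdSimplex ℝ ι).inter (Submodule.convex _))
    ((isCompact_stdSimplex ℝ ι).inter_right (Submodule.closed_of_finiteDimensional _))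
    (Submodule.convex _) (Submodule.closed_of_finiteDimensional _) hdisj
  have ht : t < 0 := by simpa using hfL 0 (zero_mem _)
  have hf0 : ∀ w ∈ L ⊔ Q, f w = 0 := fun w hw => by
    by_contra hne
    have := hfL (((t - 1) / f w) • w) (Submodule.smul_mem _ _ hw)
    rw [map_smul, smul_eq_mul, div_mul_cancel₀ _ hne] at this
    linarith
  refine ⟨fun i => -f (Pi.single i 1), fun i hi => ?_, fun i hi => ?_, fun u hu => ?_⟩
  · have hK : Pi.single i 1 ∈ K := ⟨single_mem_stdSimplex ℝ i,
      Submodule.mem_pi.2 fun j hj => by simp [Pi.single_eq_of_ne (ne_of_mem_of_not_mem hi hj).symm]⟩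
    linarith [hfK _ hK]
  · have hQ : Pi.single i (1 : ℝ) ∈ Q := Submodule.mem_pi.2 fun j hj =>
      by simp [Pi.single_eq_of_ne (ne_of_mem_of_not_mem hj hi)]
    simp [hf0 _ (Submodule.mem_sup_right hQ)]
  · have := hf0 u (Submodule.mem_sup_left hu)
    have hfu : f u = ∑ i, u i * f (Pi.single i 1) := by
      conv_lhs => rw [← Finset.univ_sum_single u]
      rw [map_sum]
      refine Finset.sum_congr rfl fun i _ => ?_
      rw [← smul_eq_mul, ← map_smul, ← Pi.single_smul', smul_eq_mul, mul_one]
    rw [hfu] at this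
    simp only [dotProduct, neg_mul, sum_neg_distrib, neg_eq_zero]
    rw [← this]
    exact sum_congr rfl fun i _ => mul_comm _ _

theorem exists_nonneg_mem_nonneg_orthogonal_add_pos (L : Submodule ℝ (ι → ℝ)) :
    ∃ u ∈ L, ∃ v : ι → ℝ, (∀ w ∈ L, v ⬝ᵥ w = 0) ∧ 0 ≤ u ∧ 0 ≤ v ∧ ∀ i, 0 < u i + v i := by
  set J : Set ι := {i | ∃ u ∈ L, 0 ≤ u ∧ 0 < u i}
  have hw : ∀ i, ∃ u ∈ L, 0 ≤ u ∧ (i ∈ J → 0 < u i) := fun i => by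
    by_cases hi : i ∈ J
    · obtain ⟨u, hu, hu0, hui⟩ := hi
      exact ⟨u, hu, hu0, fun _ => hui⟩
    · exact ⟨0, L.zero_mem, le_rfl, fun h => absurd h hi⟩
  choose w hwL hw0 hwJ using hw
  set p := ∑ i, w i
  have hpL : p ∈ L := L.sum_mem fun i _ => hwL i
  have hp0 : 0 ≤ p := Finset.sum_nonneg fun i _ => hw0 i
  have hpJ : ∀ i ∈ J, 0 < p i := fun i hi => by
    simp only [p, Finset.sum_apply]
    exact (hwJ i hi).trans_le (single_le_sum (fun j _ => hw0 j i) (mem_univ i))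
  -- `p` is positive on all of `J`, so adding a multiple of it makes any `u ∈ L` that is
  -- nonnegative off `J` nonnegative everywhere; hence `u` vanishes off `J` by maximality of `J`.
  obtain ⟨y, hyJ, hy0, hyL⟩ := exists_orthogonal_pos_on L Jᶜ fun u hu hu0 i hi => by
    obtain ⟨t, ht0, hut⟩ := exists_nonneg_add_smul_nonneg hp0 fun j hj =>
      hu0 j fun hjJ => (hpJ j hjJ).ne' hj
    refine le_antisymm (not_lt.1 fun hui => hi ?_) (hu0 i hi)
    refine ⟨u + t • p, L.add_mem hu (L.smul_mem t hpL), hut, ?_⟩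
    simpa using add_pos_of_pos_of_nonneg hui (mul_nonneg ht0 (hp0 i))
  refine ⟨p, hpL, y, hyL, hp0, fun i => ?_, fun i => ?_⟩
  · by_cases hi : i ∈ J
    · exact (hy0 i (not_not.2 hi)).ge
    · exact (hyJ i hi).le
  · by_cases hi : i ∈ J
    · simpa [hy0 i (not_not.2 hi)] using hpJ i hi
    · exact add_pos_of_nonneg_of_pos (hp0 i) (hyJ i hi)

end Alternative

theorem Matrix.exists_pos_mulVec_nonpos {α β : Type*} [Fintype α] [Fintype β]
    (g : Matrix α β ℝ) (h : ¬∃ x : α → ℝ, 0 ≤ x ∧ 0 < x ᵥ* g) :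
    ∃ y : β → ℝ, (∀ b, 0 < y b) ∧ g *ᵥ y ≤ 0 := by
  classical
  obtain ⟨_, ⟨x, rfl⟩, v, hvL, hu0, hv0, huv⟩ :=
    exists_nonneg_mem_nonneg_orthogonal_add_pos
      (LinearMap.range (fromRows (1 : Matrix α α ℝ) gᵀ).mulVecLin)
  simp only [mulVecLin_apply, fromRows_mulVec, one_mulVec, mulVec_transpose] at hu0 huv
  have hxg : x ᵥ* g = 0 := by
    by_contra hne
    exact h ⟨x, fun a => hu0 (.inl a), lt_of_le_of_ne (fun b => hu0 (.inr b)) (Ne.symm hne)⟩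
  have hvM : v ᵥ* fromRows (1 : Matrix α α ℝ) gᵀ = 0 :=
    dotProduct_eq_zero _ fun z => by rw [← dotProduct_mulVec]; exact hvL _ ⟨z, rfl⟩
  rw [vecMul_fromRows, vecMul_one, vecMul_transpose] at hvM
  refine ⟨v ∘ Sum.inr, fun b => by simpa [hxg] using huv (.inr b), fun a => ?_⟩
  have := congrFun hvM a
  have := hv0 (.inl a)
  simp only [Pi.add_apply, Function.comp_apply, Pi.zero_apply] at *
  linarith

namespace IA

theorem isDist_inv_sum_smul {α : Type} [Fintype α] {x : α → ℝ} (hx : 0 ≤ x)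
    (hs : ∑ a, x a ≠ 0) : IsDist ((∑ a, x a)⁻¹ • x) :=
  ⟨fun a => mul_nonneg (inv_nonneg.2 (sum_nonneg fun b _ => hx b)) (hx a), by
    simp [← mul_sum, hs]⟩

variable {n : ℕ}

section Gain

variable {S : Fin n → Type} (u : Fin n → (∀ j, S j) → ℝ) (i : Fin n)

def deviationGain (σ a : S i) (τ : Oth S i) : ℝ := u i (ext i a τ) - u i (ext i σ τ)

noncomputable def gainMatrix (σ : S i) (Y : Set (Oth S i)) : Matrix (S i) (Oth S i) ℝ :=
  of fun a => Y.indicator (deviationGain u i σ a)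

variable [∀ j, Fintype (S j)] {i}

theorem EUmix_sub_eq_sum {ν : S i → ℝ} (hν : ∑ a, ν a = 1) (σ : S i) (τ : Oth S i) :
    EUmix u i ν τ - u i (ext i σ τ) = ∑ a, ν a * deviationGain u i σ a τ := by
  simp only [EUmix, deviationGain, mul_sub, sum_sub_distrib, ← sum_mul, hν, one_mul]

theorem EU_sub_eq_sum (σ a : S i) (μ : Oth S i → ℝ) :
    EU u i a μ - EU u i σ μ = ∑ τ, μ τ * deviationGain u i σ a τ := by
  simp only [EU, deviationGain, mul_sub, sum_sub_distrib]

theorem not_weaklyDominated_of_bestResponse {σ : S i} {Y : Set (Oth S i)} {μ : Oth S i → ℝ}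
    (hμ : IsBelief μ) (hsupp : ∀ τ, 0 < μ τ ↔ τ ∈ Y) (hbr : BestResponse u i σ μ) :
    ¬∃ ν : S i → ℝ, IsDist ν ∧ WDom u i ν σ Y := by
  rintro ⟨ν, ⟨hν0, hν1⟩, hle, τ₀, hτ₀, hlt⟩
  have hgain : ∀ τ, 0 ≤ μ τ * (EUmix u i ν τ - u i (ext i σ τ)) := fun τ => by
    by_cases hτ : τ ∈ Y
    · exact mul_nonneg (hμ.1 τ) (sub_nonneg.2 (hle τ hτ))
    · simp [le_antisymm (not_lt.1 (mt (hsupp τ).1 hτ)) (hμ.1 τ)]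
  have := calc
    0 < ∑ τ, μ τ * (EUmix u i ν τ - u i (ext i σ τ)) :=
      sum_pos' (fun τ _ => hgain τ)
        ⟨τ₀, mem_univ _, mul_pos ((hsupp τ₀).2 hτ₀) (sub_pos.2 hlt)⟩
    _ = ∑ a, ν a * (EU u i a μ - EU u i σ μ) := by
      simp only [EUmix_sub_eq_sum u hν1, EU_sub_eq_sum, mul_sum]
      rw [sum_comm]
      exact sum_congr rfl fun a _ => sum_congr rfl fun τ _ => by ring
    _ ≤ 0 := sum_nonpos fun a _ =>
      mul_nonpos_of_nonneg_of_nonpos (hν0 a) (sub_nonpos.2 (hbr a))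
  exact this.false

theorem exists_weaklyDominating_of_vecMul_pos {σ : S i} {Y : Set (Oth S i)} {x : S i → ℝ}
    (hx0 : 0 ≤ x) (hx : 0 < x ᵥ* gainMatrix u i σ Y) :
    ∃ ν : S i → ℝ, IsDist ν ∧ WDom u i ν σ Y := by
  have hxY : ∀ τ ∈ Y, (x ᵥ* gainMatrix u i σ Y) τ =
      ∑ a, x a * deviationGain u i σ a τ := fun τ hτ => by
    simp only [vecMul, dotProduct, gainMatrix, of_apply, Set.indicator_of_mem hτ]
  obtain ⟨hle, τ₀, hlt⟩ := Pi.lt_def.1 hx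
  have hτ₀ : τ₀ ∈ Y := by
    by_contra hτ₀
    simp [vecMul, dotProduct, gainMatrix, Set.indicator_of_notMem hτ₀] at hlt
  have hs : 0 < ∑ a, x a := by
    refine (sum_nonneg fun a _ => hx0 a).lt_of_ne fun hs => hlt.ne' ?_
    have hx : x = 0 :=
      funext fun a => (sum_eq_zero_iff_of_nonneg fun b _ => hx0 b).1 hs.symm a (mem_univ a)
    rw [hx, zero_vecMul]
  have hν := isDist_inv_sum_smul hx0 hs.ne'
  have hgain : ∀ τ ∈ Y, EUmix u i ((∑ a, x a)⁻¹ • x) τ - u i (ext i σ τ) =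
      (∑ a, x a)⁻¹ * (x ᵥ* gainMatrix u i σ Y) τ := fun τ hτ => by
    rw [EUmix_sub_eq_sum u hν.2, hxY τ hτ, mul_sum]
    simp only [Pi.smul_apply, smul_eq_mul, mul_assoc]
  refine ⟨_, hν, fun τ hτ => ?_, τ₀, hτ₀, ?_⟩
  · have := mul_nonneg (inv_nonneg.2 hs.le) (hle τ)
    linarith [hgain τ hτ]
  · have := mul_pos (inv_pos.2 hs) hlt
    linarith [hgain τ₀ hτ₀]

theorem exists_bestResponse_of_mulVec_nonpos {σ : S i} {Y : Set (Oth S i)} (hY : Y.Nonempty)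
    {y : Oth S i → ℝ} (hy : ∀ τ, 0 < y τ) (hgy : gainMatrix u i σ Y *ᵥ y ≤ 0) :
    ∃ μ : Oth S i → ℝ, IsBelief μ ∧ (∀ τ, 0 < μ τ ↔ τ ∈ Y) ∧ BestResponse u i σ μ := by
  have hyY : 0 ≤ Y.indicator y := Set.indicator_nonneg fun τ _ => (hy τ).le
  obtain ⟨τ₀, hτ₀⟩ := hY
  have hc : 0 < ∑ τ, Y.indicator y τ :=
    sum_pos' (fun τ _ => hyY τ) ⟨τ₀, mem_univ _, by simpa [hτ₀] using hy τ₀⟩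
  refine ⟨_, isDist_inv_sum_smul hyY hc.ne', fun τ => ?_, fun a => ?_⟩
  · by_cases hτ : τ ∈ Y
    · simpa [hτ] using mul_pos (inv_pos.2 hc) (hy τ)
    · simp [hτ]
  · have hgain : EU u i a ((∑ τ, Y.indicator y τ)⁻¹ • Y.indicator y) -
        EU u i σ ((∑ τ, Y.indicator y τ)⁻¹ • Y.indicator y) =
        (∑ τ, Y.indicator y τ)⁻¹ * (gainMatrix u i σ Y *ᵥ y) a := by
      rw [EU_sub_eq_sum, mulVec, dotProduct, mul_sum]
      refine sum_congr rfl fun τ _ => ?_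
      by_cases hτ : τ ∈ Y
      · simp only [gainMatrix, of_apply, Set.indicator_of_mem hτ, Pi.smul_apply, smul_eq_mul]
        ring
      · simp [gainMatrix, hτ]
    linarith [mul_nonpos_of_nonneg_of_nonpos (inv_nonneg.2 hc.le) (hgy a)]

end Gain

theorem not_weakly_dominated_iff_best_response_full_support_general
    {S : Fin n → Type} [∀ j, Fintype (S j)]
    (u : ∀ i : Fin n, (∀ j, S j) → ℝ) (i : Fin n) (σ : S i)
    (Y : Set (Oth S i)) (hY : Y.Nonempty) :
    (¬ ∃ ν : S i → ℝ, IsDist ν ∧ WDom u i ν σ Y) ↔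
      ∃ μ : Oth S i → ℝ, IsBelief μ ∧ (∀ τ, 0 < μ τ ↔ τ ∈ Y) ∧ BestResponse u i σ μ := by
  refine ⟨fun h => ?_, fun ⟨_, hμ, hsupp, hbr⟩ =>
    not_weaklyDominated_of_bestResponse u hμ hsupp hbr⟩
  obtain ⟨y, hy, hgy⟩ := (gainMatrix u i σ Y).exists_pos_mulVec_nonpos
    fun ⟨x, hx0, hx⟩ => h (exists_weaklyDominating_of_vecMul_pos u hx0 hx)
  exact exists_bestResponse_of_mulVec_nonpos u hY hy hgy

/-- Pearce. `σ` is not weakly dominated by any mixed strategy with respect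
to `Y` iff `σ` is a best response to some belief whose support is all of `Y`. -/
theorem not_weakly_dominated_iff_best_response_full_support
    {S : Fin n → Type} [∀ j, Fintype (S j)] [∀ j, Nonempty (S j)]
    (u : ∀ i : Fin n, (∀ j, S j) → ℝ) (i : Fin n) (σ : S i)
    (Y : Set (Oth S i)) (hY : Y.Nonempty) :
    (¬ ∃ ν : S i → ℝ, IsDist ν ∧ WDom u i ν σ Y) ↔
      ∃ μ : Oth S i → ℝ, IsBelief μ ∧ (∀ τ, 0 < μ τ ↔ τ ∈ Y) ∧ BestResponse u i σ μ :=
  not_weakly_dominated_iff_best_response_full_support_general u i σ Y hY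

end IA
end

section
/- For a pure strategy σ of player i in a finite normal-form game Γ, the following are equivalent: (a) σ is rationalizable; (b) there is an L1-measurable probability structure M appropriate for Γ and a state ω with s_i(ω) = σ and (M,ω) ⊨ E^k RAT for all k ≥ 0; (c) there is an L1-measurable probability structure M appropriate for Γ and a state ω with s_i(ω) = σ and (M,ω) ⊨ ⟨B_i⟩ E^k RAT for all k ≥ 0; (d) there is a probability structure M appropriate for Γ and a state ω with s_i(ω) = σ and (M,ω) ⊨ ⟨B_i⟩ E^k RAT for all k ≥ 0. -/
/-!
(a) ⇒ (b): take all strategy profiles as states, and let a player of type `σ' ∈ Z_j` be certain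
of `σ'` and believe `μ_{σ'}` about the others. Wherever the event `Π_j Z_j` holds, every player is
rational and assigns it probability one, so `E^k RAT` holds there for every `k`.

(d) ⇒ (a): players know their own type and `RAT_j` depends only on `j`'s type, so `E^k RAT` at `ω`
forces `s_j(ω)` to survive `k + 1` rounds of iterated deletion of never-best responses; a positive
probability of `E^k RAT` transfers this to `s_i(ω)`. The strategy sets are finite, so the decreasing
sequence of survivors stabilizes, and its limit is a set closed under best responses.
-/

open MeasureTheory

namespace IA

set_option linter.unusedVariables false

variable {n : ℕ}

variable {S : Fin n → Type}

/-! ### Rationalizability -/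

section
variable [∀ j, Fintype (S j)]

/-- Pearce's first definition of rationalizability. -/
def Rationalizable (u : ∀ i : Fin n, (∀ j, S j) → ℝ) (i : Fin n) (σ : S i) : Prop :=
  ∃ (Z : ∀ j : Fin n, Set (S j)) (μ : ∀ j : Fin n, S j → Oth S j → ℝ),
    σ ∈ Z i ∧
    ∀ j : Fin n, ∀ σ' ∈ Z j,
      IsBelief (μ j σ') ∧ (∀ τ, 0 < μ j σ' τ → τ ∈ OthSet Z j) ∧
      BestResponse u j σ' (μ j σ')

/-- Pearce's second definition of rationalizability, via iterated deletion. -/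
def Rationalizable' (u : ∀ i : Fin n, (∀ j, S j) → ℝ) (i : Fin n) (σ : S i) : Prop :=
  ∃ (X : ℕ → ∀ j : Fin n, Set (S j)) (μ : ℕ → ∀ j : Fin n, S j → Oth S j → ℝ),
    (∀ j, X 0 j = Set.univ) ∧
    (∀ k, σ ∈ X k i) ∧
    ∀ (k : ℕ) (j : Fin n), ∀ σ' ∈ X (k+1) j,
      IsBelief (μ k j σ') ∧ (∀ τ, 0 < μ k j σ' τ → τ ∈ OthSet (X k) j) ∧
      BestResponse u j σ' (μ k j σ')

end

/-! ### Probability structures appropriate for a game -/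

/-- A probability structure appropriate for the game with strategy sets `S`. -/
structure PStruct (n : ℕ) (S : Fin n → Type) where
  Ω : Type
  F : MeasurableSpace Ω
  s : Ω → ∀ j, S j
  PR : Fin n → Ω → @Measure Ω F
  PR_prob : ∀ i ω, IsProbabilityMeasure (PR i ω)
  meas_play : ∀ (i : Fin n) (σ : S i), MeasurableSet[F] {ω | s ω i = σ}
  knows_play : ∀ i ω, PR i ω {ω' | s ω' i = s ω i} = 1
  meas_PR : ∀ (i : Fin n) (π : @Measure Ω F), MeasurableSet[F] {ω | PR i ω = π}
  knows_PR : ∀ i ω, PR i ω {ω' | PR i ω' = PR i ω} = 1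

section
variable [∀ j, Fintype (S j)]

/-- The belief of player `i` at state `ω` about the strategies of the other players,
i.e. the marginal of `PR_i(ω)` on `Σ_{-i}` via `s_{-i}`. -/
noncomputable def margBelief (M : PStruct n S) (i : Fin n) (ω : M.Ω) (τ : Oth S i) : ℝ :=
  (M.PR i ω {ω' | ∀ j : {j : Fin n // j ≠ i}, M.s ω' j.1 = τ j}).toReal

/-- `RAT_i` holds at `ω`: player `i`'s strategy at `ω` is a best response to the belief
induced by `PR_i(ω)`. -/
def SatRAT (u : ∀ i : Fin n, (∀ j, S j) → ℝ) (M : PStruct n S) (i : Fin n) (ω : M.Ω) : Prop :=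
  BestResponse u i (M.s ω i) (margBelief M i ω)

end

/-! ### The language L1 and its semantics -/

inductive L1 (n : ℕ) : Type where
  | tt : L1 n
  | RAT (i : Fin n) : L1 n
  | neg (φ : L1 n) : L1 n
  | and (φ ψ : L1 n) : L1 n
  | B (i : Fin n) (φ : L1 n) : L1 n
  | Bpos (i : Fin n) (φ : L1 n) : L1 n

def Sat1 [∀ j, Fintype (S j)] (u : ∀ i : Fin n, (∀ j, S j) → ℝ) :
    L1 n → (M : PStruct n S) → M.Ω → Prop
  | .tt, _, _ => True
  | .RAT i, M, ω => SatRAT u M i ω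
  | .neg φ, M, ω => ¬ Sat1 u φ M ω
  | .and φ ψ, M, ω => Sat1 u φ M ω ∧ Sat1 u ψ M ω
  | .B i φ, M, ω => ∃ A, MeasurableSet[M.F] A ∧ A ⊆ {ω' | Sat1 u φ M ω'} ∧ M.PR i ω A = 1
  | .Bpos i φ, M, ω => ∃ A, MeasurableSet[M.F] A ∧ A ⊆ {ω' | Sat1 u φ M ω'} ∧ 0 < M.PR i ω A

def conjList1 : List (L1 n) → L1 n
  | [] => .tt
  | φ :: l => .and φ (conjList1 l)

/-- `RAT := RAT_1 ∧ ⋯ ∧ RAT_n`. -/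
def RATall (n : ℕ) : L1 n := conjList1 ((List.finRange n).map .RAT)

/-- `E φ := B_1 φ ∧ ⋯ ∧ B_n φ`. -/
def EF : L1 n → L1 n := fun φ => conjList1 ((List.finRange n).map (fun i => .B i φ))

/-- `Ek n k` is the formula `E^k RAT`. -/
def Ek (n : ℕ) : ℕ → L1 n
  | 0 => RATall n
  | k+1 => EF (Ek n k)


@[simp] lemma ext_apply_self (i : Fin n) (σ : S i) (τ : Oth S i) : ext i σ τ i = σ := by
  simp [ext]

@[simp] lemma ext_apply_coe {i : Fin n} (σ : S i) (τ : Oth S i) (j : {j : Fin n // j ≠ i}) :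
    ext i σ τ j = τ j :=
  dif_neg j.2

lemma ext_mem_univ_pi {Z : ∀ j : Fin n, Set (S j)} {i : Fin n} {σ : S i} {τ : Oth S i}
    (hσ : σ ∈ Z i) (hτ : τ ∈ OthSet Z i) : ext i σ τ ∈ Set.univ.pi Z := by
  intro j _
  by_cases hj : j = i
  · subst hj
    simpa using hσ
  · simpa [ext, hj] using hτ ⟨j, hj⟩

section Semantics
variable [∀ j, Fintype (S j)] (u : ∀ i : Fin n, (∀ j, S j) → ℝ) (M : PStruct n S)

lemma sat1_conjList1 (l : List (L1 n)) (ω : M.Ω) :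
    Sat1 u (conjList1 l) M ω ↔ ∀ φ ∈ l, Sat1 u φ M ω := by
  induction l with
  | nil => simp [conjList1, Sat1]
  | cons φ l ih => simp [conjList1, Sat1, ih]

lemma sat1_RATall (ω : M.Ω) : Sat1 u (RATall n) M ω ↔ ∀ j, SatRAT u M j ω := by
  simp [RATall, sat1_conjList1, Sat1]

lemma sat1_Ek_succ (k : ℕ) (ω : M.Ω) :
    Sat1 u (Ek n (k + 1)) M ω ↔ ∀ j, Sat1 u (.B j (Ek n k)) M ω := by
  simp [Ek, EF, sat1_conjList1]

end Semantics

namespace PStruct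
variable (M : PStruct n S)

lemma ae_sameType (j : Fin n) (ω : M.Ω) :
    ∀ᵐ ω' ∂M.PR j ω, M.s ω' j = M.s ω j ∧ M.PR j ω' = M.PR j ω := by
  let _ := M.F
  have := M.PR_prob j ω
  exact Filter.Eventually.and ((mem_ae_iff_prob_eq_one (M.meas_play j _)).2 (M.knows_play j ω))
    ((mem_ae_iff_prob_eq_one (M.meas_PR j _)).2 (M.knows_PR j ω))

lemma exists_sameType_mem {j : Fin n} {ω : M.Ω} {A : Set M.Ω} (hA : M.PR j ω A ≠ 0) :
    ∃ ω' ∈ A, M.s ω' j = M.s ω j ∧ M.PR j ω' = M.PR j ω :=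
  Measure.exists_mem_of_measure_ne_zero_of_ae hA (ae_restrict_of_ae (M.ae_sameType j ω))

def others (j : Fin n) (ω : M.Ω) : Oth S j := fun j' => M.s ω j'.1

lemma others_eq_iff {j : Fin n} {ω : M.Ω} {τ : Oth S j} :
    M.others j ω = τ ↔ ∀ j', M.s ω j'.1 = τ j' :=
  ⟨fun h j' => h ▸ rfl, funext⟩

lemma measurableSet_others_preimage (j : Fin n) (τ : Oth S j) :
    MeasurableSet[M.F] (M.others j ⁻¹' {τ}) := by
  have h : M.others j ⁻¹' {τ} = ⋂ j', {ω | M.s ω j'.1 = τ j'} := by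
    ext ω
    simp [others_eq_iff]
  rw [h]
  exact MeasurableSet.iInter fun j' => M.meas_play _ _

end PStruct

lemma margBelief_eq (M : PStruct n S) (j : Fin n) (ω : M.Ω) (τ : Oth S j) :
    margBelief M j ω τ = (M.PR j ω (M.others j ⁻¹' {τ})).toReal := by
  unfold margBelief
  congr 2
  ext ω'
  exact M.others_eq_iff.symm

section Beliefs
variable [∀ j, Fintype (S j)] (u : ∀ i : Fin n, (∀ j, S j) → ℝ) (M : PStruct n S)

lemma margBelief_isBelief (j : Fin n) (ω : M.Ω) : IsBelief (margBelief M j ω) := by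
  let _ := M.F
  have := M.PR_prob j ω
  refine ⟨fun τ => ENNReal.toReal_nonneg, ?_⟩
  simp_rw [margBelief_eq]
  rw [← ENNReal.toReal_sum fun τ _ => measure_ne_top _ _,
    sum_measure_preimage_singleton _ fun τ _ => M.measurableSet_others_preimage j τ]
  simp

lemma satRAT_of_sameType {j : Fin n} {ω ω' : M.Ω} (hs : M.s ω' j = M.s ω j)
    (hPR : M.PR j ω' = M.PR j ω) (h : SatRAT u M j ω') : SatRAT u M j ω := by
  unfold SatRAT margBelief at *
  rwa [hs, hPR] at h

lemma exists_sameType_sat1_of_B {j : Fin n} {φ : L1 n} {ω : M.Ω} (h : Sat1 u (.B j φ) M ω) :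
    ∃ ω', M.s ω' j = M.s ω j ∧ M.PR j ω' = M.PR j ω ∧ Sat1 u φ M ω' := by
  obtain ⟨A, -, hAφ, hA⟩ := h
  obtain ⟨ω', hω'A, hs, hPR⟩ := M.exists_sameType_mem (hA ▸ one_ne_zero : M.PR j ω A ≠ 0)
  exact ⟨ω', hs, hPR, hAφ hω'A⟩

lemma exists_others_eq_of_B {j : Fin n} {φ : L1 n} {ω : M.Ω} (h : Sat1 u (.B j φ) M ω)
    {τ : Oth S j} (hτ : 0 < margBelief M j ω τ) : ∃ ω', M.others j ω' = τ ∧ Sat1 u φ M ω' := by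
  let _ := M.F
  have := M.PR_prob j ω
  obtain ⟨A, hAm, hAφ, hA⟩ := h
  rw [margBelief_eq] at hτ
  obtain ⟨ω', hω', hω'A⟩ := Measure.exists_mem_of_measure_ne_zero_of_ae
    (ENNReal.toReal_pos_iff.1 hτ).1.ne' (ae_restrict_of_ae ((mem_ae_iff_prob_eq_one hAm).2 hA))
  exact ⟨ω', hω', hAφ hω'A⟩

lemma satRAT_of_sat1_Ek (j : Fin n) : ∀ (k : ℕ) (ω : M.Ω), Sat1 u (Ek n k) M ω → SatRAT u M j ω
  | 0, ω, h => (sat1_RATall u M ω).1 h j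
  | k + 1, ω, h => by
    obtain ⟨ω', hs, hPR, hω'⟩ := exists_sameType_sat1_of_B u M ((sat1_Ek_succ u M k ω).1 h j)
    exact satRAT_of_sameType u M hs hPR (satRAT_of_sat1_Ek j k ω' hω')

end Beliefs

section Deletion
variable [∀ j, Fintype (S j)] (u : ∀ i : Fin n, (∀ j, S j) → ℝ)

def bestResponses (X : ∀ j : Fin n, Set (S j)) (j : Fin n) : Set (S j) :=
  {σ | ∃ μ : Oth S j → ℝ, IsBelief μ ∧ (∀ τ, 0 < μ τ → τ ∈ OthSet X j) ∧ BestResponse u j σ μ}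

def survivors (k : ℕ) : ∀ j : Fin n, Set (S j) := (bestResponses u)^[k] fun _ => Set.univ

lemma bestResponses_mono : Monotone (bestResponses u) := by
  rintro X Y hXY j σ ⟨μ, hμ, hsupp, hbr⟩
  exact ⟨μ, hμ, fun τ hτ j' => hXY j'.1 (hsupp τ hτ j'), hbr⟩

lemma survivors_succ (k : ℕ) : survivors u (k + 1) = bestResponses u (survivors u k) :=
  Function.iterate_succ_apply' _ _ _

lemma survivors_antitone : Antitone (survivors u) := by
  refine antitone_nat_of_succ_le fun k => ?_
  induction k with
  | zero => exact fun _ _ _ => trivial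
  | succ k ih =>
    calc survivors u (k + 2) = bestResponses u (survivors u (k + 1)) := survivors_succ u _
      _ ≤ bestResponses u (survivors u k) := bestResponses_mono u ih
      _ = survivors u (k + 1) := (survivors_succ u k).symm

lemma rationalizable_of_subset_bestResponses {Z : ∀ j : Fin n, Set (S j)}
    (hZ : Z ≤ bestResponses u Z) {i : Fin n} {σ : S i} (hσ : σ ∈ Z i) :
    Rationalizable u i σ := by
  choose! μ hμ using fun j σ' (hσ' : σ' ∈ Z j) => hZ j hσ'
  exact ⟨Z, μ, hσ, hμ⟩

lemma rationalizable_of_forall_mem_survivors {i : Fin n} {σ : S i}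
    (h : ∀ k, σ ∈ survivors u k i) : Rationalizable u i σ := by
  obtain ⟨K, hK⟩ := WellFoundedLT.antitone_chain_condition (survivors_antitone u)
  refine rationalizable_of_subset_bestResponses u (Z := survivors u K) ?_ (h K)
  rw [← survivors_succ, ← hK (K + 1) K.le_succ]

end Deletion

section Epistemic
variable [∀ j, Fintype (S j)] (u : ∀ i : Fin n, (∀ j, S j) → ℝ)

lemma mem_survivors_of_sat1_Ek (M : PStruct n S) :
    ∀ (k : ℕ) (j : Fin n) (ω : M.Ω), Sat1 u (Ek n k) M ω → M.s ω j ∈ survivors u (k + 1) j := by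
  intro k j ω h
  rw [survivors_succ]
  refine ⟨margBelief M j ω, margBelief_isBelief M j ω, fun τ hτ j' => ?_,
    satRAT_of_sat1_Ek u M j k ω h⟩
  cases k with
  | zero => trivial
  | succ k =>
    obtain ⟨ω', rfl, hω'⟩ := exists_others_eq_of_B u M ((sat1_Ek_succ u M k ω).1 h j) hτ
    exact mem_survivors_of_sat1_Ek M k j'.1 ω' hω'

lemma rationalizable_of_sat1_Bpos_Ek {M : PStruct n S} {ω : M.Ω} {i : Fin n}
    (h : ∀ k, Sat1 u (.Bpos i (Ek n k)) M ω) : Rationalizable u i (M.s ω i) := by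
  refine rationalizable_of_forall_mem_survivors u fun k => ?_
  cases k with
  | zero => trivial
  | succ k =>
    obtain ⟨A, -, hAφ, hA⟩ := h k
    obtain ⟨ω', hω'A, hs, -⟩ := M.exists_sameType_mem hA.ne'
    exact hs ▸ mem_survivors_of_sat1_Ek u M k i ω' (hAφ hω'A)

lemma sat1_Bpos_of_sat1_Ek_succ {M : PStruct n S} {ω : M.Ω} {i : Fin n} {k : ℕ}
    (h : Sat1 u (Ek n (k + 1)) M ω) : Sat1 u (.Bpos i (Ek n k)) M ω := by
  obtain ⟨A, hAm, hAφ, hA⟩ := (sat1_Ek_succ u M k ω).1 h i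
  exact ⟨A, hAm, hAφ, hA ▸ one_pos⟩

lemma sat1_Ek_of_mem (M : PStruct n S) {P : Set M.Ω} (hP : MeasurableSet[M.F] P)
    (hRAT : ∀ ω ∈ P, ∀ j, SatRAT u M j ω) (hbelieved : ∀ ω ∈ P, ∀ j, M.PR j ω P = 1) :
    ∀ (k : ℕ), ∀ ω ∈ P, Sat1 u (Ek n k) M ω
  | 0, ω, hω => (sat1_RATall u M ω).2 (hRAT ω hω)
  | k + 1, ω, hω => (sat1_Ek_succ u M k ω).2 fun j =>
    ⟨P, hP, fun ω' hω' => sat1_Ek_of_mem M hP hRAT hbelieved k ω' hω', hbelieved ω hω j⟩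

end Epistemic

section Belief
variable [∀ j, Fintype (S j)] {i : Fin n} {μ : Oth S i → ℝ}

lemma IsBelief.exists_pos (h : IsBelief μ) : ∃ τ, 0 < μ τ := by
  obtain ⟨τ, -, hτ⟩ := Finset.exists_lt_of_sum_lt (f := 0) (g := μ) (s := Finset.univ)
    (by simp [h.2])
  exact ⟨τ, hτ⟩

noncomputable def IsBelief.toPMF (h : IsBelief μ) : PMF (Oth S i) :=
  PMF.ofFintype (fun τ => ENNReal.ofReal (μ τ)) <| by
    rw [← ENNReal.ofReal_sum_of_nonneg fun τ _ => h.1 τ, h.2, ENNReal.ofReal_one]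

lemma IsBelief.toReal_toPMF (h : IsBelief μ) (τ : Oth S i) : (h.toPMF τ).toReal = μ τ :=
  ENNReal.toReal_ofReal (h.1 τ)

lemma IsBelief.mem_support_toPMF (h : IsBelief μ) {τ : Oth S i} :
    τ ∈ h.toPMF.support ↔ 0 < μ τ := by
  rw [PMF.mem_support_iff, IsBelief.toPMF, PMF.ofFintype_apply, ← pos_iff_ne_zero,
    ENNReal.ofReal_pos]

end Belief

section Canonical
variable (β : ∀ j : Fin n, S j → PMF (Oth S j))

noncomputable def canonicalMeasure (j : Fin n) (σ : S j) : @Measure (∀ j, S j) ⊤ :=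
  @PMF.toMeasure _ ⊤ ((β j σ).map (ext j σ))

lemma canonicalMeasure_eq_one {j : Fin n} {σ : S j} {A : Set (∀ j, S j)}
    (hA : ∀ τ ∈ (β j σ).support, ext j σ τ ∈ A) : canonicalMeasure β j σ A = 1 := by
  let _ : MeasurableSpace (∀ j, S j) := ⊤
  rw [canonicalMeasure, PMF.toMeasure_apply_eq_one_iff _ MeasurableSpace.measurableSet_top,
    PMF.support_map]
  rintro _ ⟨τ, hτ, rfl⟩
  exact hA τ hτ

lemma canonicalMeasure_apply_others (j : Fin n) (σ : S j) (τ : Oth S j) :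
    canonicalMeasure β j σ {ω | ∀ j' : {j' // j' ≠ j}, ω j'.1 = τ j'} = β j σ τ := by
  let _ : MeasurableSpace (∀ j, S j) := ⊤
  rw [canonicalMeasure, PMF.toMeasure_apply_eq_toOuterMeasure, PMF.toOuterMeasure_map_apply,
    ← PMF.toOuterMeasure_apply_singleton]
  congr 1
  ext τ'
  simp only [Set.mem_preimage, Set.mem_ofPred_eq, ext_apply_coe, Set.mem_singleton_iff]
  exact ⟨funext, fun h j' => h ▸ rfl⟩

noncomputable def canonicalStruct : PStruct n S where
  Ω := ∀ j, S j
  F := ⊤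
  s := id
  PR j ω := canonicalMeasure β j (ω j)
  PR_prob _ _ := @PMF.toMeasure.isProbabilityMeasure _ ⊤ _
  meas_play _ _ := MeasurableSpace.measurableSet_top
  knows_play _ _ := canonicalMeasure_eq_one β fun _ _ => ext_apply_self _ _ _
  meas_PR _ _ := MeasurableSpace.measurableSet_top
  knows_PR j ω := canonicalMeasure_eq_one β fun τ _ =>
    congrArg (canonicalMeasure β j) (ext_apply_self _ _ _)

lemma margBelief_canonicalStruct (j : Fin n) (ω : ∀ j, S j) (τ : Oth S j) :
    margBelief (canonicalStruct β) j ω τ = (β j (ω j) τ).toReal :=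
  congrArg ENNReal.toReal (canonicalMeasure_apply_others β j (ω j) τ)

end Canonical

lemma exists_sat1_Ek_of_rationalizable [∀ j, Fintype (S j)]
    (u : ∀ i : Fin n, (∀ j, S j) → ℝ) {i : Fin n} {σ : S i} (h : Rationalizable u i σ) :
    ∃ (M : PStruct n S) (ω : M.Ω), (∀ φ : L1 n, MeasurableSet[M.F] {ω' | Sat1 u φ M ω'}) ∧
      M.s ω i = σ ∧ ∀ k : ℕ, Sat1 u (Ek n k) M ω := by
  classical
  obtain ⟨Z, μ, hσ, hZ⟩ := h
  obtain ⟨τ₀, hτ₀⟩ := (hZ i σ hσ).1.exists_pos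
  set ω₀ := ext i σ τ₀
  have hω₀ : ω₀ ∈ Set.univ.pi Z := ext_mem_univ_pi hσ ((hZ i σ hσ).2.1 τ₀ hτ₀)
  -- strategies outside `Z` are never played on the event `Z`, so their beliefs do not matter
  let β : ∀ j, S j → PMF (Oth S j) := fun j σ' =>
    if h : σ' ∈ Z j then (hZ j σ' h).1.toPMF else PMF.pure fun j' => ω₀ j'.1
  have hβ : ∀ j σ' (h : σ' ∈ Z j), β j σ' = (hZ j σ' h).1.toPMF := fun j σ' h => dif_pos h
  have hRAT : ∀ ω ∈ Set.univ.pi Z, ∀ j, SatRAT u (canonicalStruct β) j ω := by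
    intro ω hω j
    have hμ : margBelief (canonicalStruct β) j ω = μ j (ω j) := by
      funext τ
      rw [margBelief_canonicalStruct, hβ j _ (hω j trivial), IsBelief.toReal_toPMF]
    unfold SatRAT
    rw [hμ]
    exact (hZ j (ω j) (hω j trivial)).2.2
  have hbelieved : ∀ ω ∈ Set.univ.pi Z, ∀ j, (canonicalStruct β).PR j ω (Set.univ.pi Z) = 1 := by
    intro ω hω j
    refine canonicalMeasure_eq_one β fun τ hτ => ext_mem_univ_pi (hω j trivial) ?_
    rw [hβ j _ (hω j trivial), IsBelief.mem_support_toPMF] at hτ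
    exact (hZ j (ω j) (hω j trivial)).2.1 τ hτ
  exact ⟨canonicalStruct β, ω₀, fun _ => MeasurableSpace.measurableSet_top, ext_apply_self _ _ _,
    fun k => sat1_Ek_of_mem u (canonicalStruct β) MeasurableSpace.measurableSet_top hRAT
      hbelieved k ω₀ hω₀⟩

theorem rationalizable_characterization_general
    {S : Fin n → Type} [∀ j, Fintype (S j)]
    (u : ∀ i : Fin n, (∀ j, S j) → ℝ) (i : Fin n) (σ : S i) :
    (Rationalizable u i σ ↔
      ∃ (M : PStruct n S) (ω : M.Ω),
        (∀ φ : L1 n, MeasurableSet[M.F] {ω' | Sat1 u φ M ω'}) ∧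
        M.s ω i = σ ∧ ∀ k : ℕ, Sat1 u (Ek n k) M ω) ∧
    ((∃ (M : PStruct n S) (ω : M.Ω),
        (∀ φ : L1 n, MeasurableSet[M.F] {ω' | Sat1 u φ M ω'}) ∧
        M.s ω i = σ ∧ ∀ k : ℕ, Sat1 u (Ek n k) M ω) ↔
      ∃ (M : PStruct n S) (ω : M.Ω),
        (∀ φ : L1 n, MeasurableSet[M.F] {ω' | Sat1 u φ M ω'}) ∧
        M.s ω i = σ ∧ ∀ k : ℕ, Sat1 u (.Bpos i (Ek n k)) M ω) ∧
    ((∃ (M : PStruct n S) (ω : M.Ω),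
        (∀ φ : L1 n, MeasurableSet[M.F] {ω' | Sat1 u φ M ω'}) ∧
        M.s ω i = σ ∧ ∀ k : ℕ, Sat1 u (.Bpos i (Ek n k)) M ω) ↔
      ∃ (M : PStruct n S) (ω : M.Ω),
        M.s ω i = σ ∧ ∀ k : ℕ, Sat1 u (.Bpos i (Ek n k)) M ω) := by
  have hab := exists_sat1_Ek_of_rationalizable u (σ := σ)
  have hbc : ∀ {M : PStruct n S} {ω : M.Ω}, (∀ k, Sat1 u (Ek n k) M ω) →
      ∀ k, Sat1 u (.Bpos i (Ek n k)) M ω :=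
    fun h k => sat1_Bpos_of_sat1_Ek_succ u (h (k + 1))
  have hda : (∃ (M : PStruct n S) (ω : M.Ω),
      M.s ω i = σ ∧ ∀ k, Sat1 u (.Bpos i (Ek n k)) M ω) → Rationalizable u i σ :=
    fun ⟨_, _, hs, h⟩ => hs ▸ rationalizable_of_sat1_Bpos_Ek u h
  refine ⟨⟨hab, fun ⟨M, ω, _, hs, h⟩ => hda ⟨M, ω, hs, hbc h⟩⟩,
    ⟨fun ⟨M, ω, hL1, hs, h⟩ => ⟨M, ω, hL1, hs, hbc h⟩,
      fun ⟨M, ω, _, hs, h⟩ => hab (hda ⟨M, ω, hs, h⟩)⟩,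
    ⟨fun ⟨M, ω, _, hs, h⟩ => ⟨M, ω, hs, h⟩, fun hd => ?_⟩⟩
  obtain ⟨M, ω, hL1, hs, h⟩ := hab (hda hd)
  exact ⟨M, ω, hL1, hs, hbc h⟩

/-- Theorem: characterization of rationalizability. -/
theorem rationalizable_characterization
    {S : Fin n → Type} [∀ j, Fintype (S j)] [∀ j, Nonempty (S j)]
    (u : ∀ i : Fin n, (∀ j, S j) → ℝ) (i : Fin n) (σ : S i) :
    (Rationalizable u i σ ↔
      ∃ (M : PStruct n S) (ω : M.Ω),
        (∀ φ : L1 n, MeasurableSet[M.F] {ω' | Sat1 u φ M ω'}) ∧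
        M.s ω i = σ ∧ ∀ k : ℕ, Sat1 u (Ek n k) M ω) ∧
    ((∃ (M : PStruct n S) (ω : M.Ω),
        (∀ φ : L1 n, MeasurableSet[M.F] {ω' | Sat1 u φ M ω'}) ∧
        M.s ω i = σ ∧ ∀ k : ℕ, Sat1 u (Ek n k) M ω) ↔
      ∃ (M : PStruct n S) (ω : M.Ω),
        (∀ φ : L1 n, MeasurableSet[M.F] {ω' | Sat1 u φ M ω'}) ∧
        M.s ω i = σ ∧ ∀ k : ℕ, Sat1 u (.Bpos i (Ek n k)) M ω) ∧
    ((∃ (M : PStruct n S) (ω : M.Ω),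
        (∀ φ : L1 n, MeasurableSet[M.F] {ω' | Sat1 u φ M ω'}) ∧
        M.s ω i = σ ∧ ∀ k : ℕ, Sat1 u (.Bpos i (Ek n k)) M ω) ↔
      ∃ (M : PStruct n S) (ω : M.Ω),
        M.s ω i = σ ∧ ∀ k : ℕ, Sat1 u (.Bpos i (Ek n k)) M ω) :=
  rationalizable_characterization_general u i σ

end IA
end
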